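/- The Gaussian kernel on ℝ is positive semidefinite: for every n : ℕ, every family of points x : Fin n → ℝ, and every family of coefficients c : Fin n → ℝ, one has Σ_{i} Σ_{j} c i * c j * Real.exp (-(x i - x j)^2) ≥ 0. -/

import Mathlib

/-!
Writing `-(x - y)^2 = -x^2 - y^2 + 2xy` and expanding `exp (2xy)` in its power series gives
`exp (-(x - y)^2) = ∑ₖ φₖ(x) φₖ(y)` with `φₖ(x) = exp (-x^2) (√2 x)^k / √k!`. So the kernel is the
inner product of the feature vectors `(φₖ(x))ₖ` in `ℓ²(ℕ)`, and a quadratic form of a Gram matrix is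
the squared norm `‖∑ᵢ cᵢ Φ(xᵢ)‖²`.
-/

open Real Finset
open scoped Nat RealInnerProductSpace

theorem sum_sum_mul_mul_inner_nonneg {E ι : Type*} [NormedAddCommGroup E] [InnerProductSpace ℝ E]
    (s : Finset ι) (c : ι → ℝ) (v : ι → E) :
    0 ≤ ∑ i ∈ s, ∑ j ∈ s, c i * c j * ⟪v i, v j⟫ := by
  have h : ⟪∑ i ∈ s, c i • v i, ∑ j ∈ s, c j • v j⟫ = ∑ i ∈ s, ∑ j ∈ s, c i * c j * ⟪v i, v j⟫ := by
    rw [sum_inner]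
    simp_rw [inner_sum, real_inner_smul_left, real_inner_smul_right, mul_assoc]
  exact h ▸ real_inner_self_nonneg

theorem Real.hasSum_pow_div_factorial (x : ℝ) : HasSum (fun n => x ^ n / n !) (exp x) := by
  rw [exp_eq_exp_ℝ]
  exact NormedSpace.expSeries_div_hasSum_exp x

noncomputable def gaussianFeatureCoeff (x : ℝ) (k : ℕ) : ℝ :=
  exp (-x ^ 2) * (√2 * x) ^ k / √(k ! : ℝ)

theorem gaussianFeatureCoeff_mul (x y : ℝ) (k : ℕ) :
    gaussianFeatureCoeff x k * gaussianFeatureCoeff y k =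
      exp (-x ^ 2) * exp (-y ^ 2) * ((2 * x * y) ^ k / k !) := by
  have hfact : √(k ! : ℝ) * √(k ! : ℝ) = k ! := mul_self_sqrt (by positivity)
  have htwo : (√2 * x) ^ k * (√2 * y) ^ k = (2 * x * y) ^ k := by
    rw [← mul_pow, show √2 * x * (√2 * y) = (√2 * √2) * x * y by ring,
      mul_self_sqrt zero_le_two]
  calc gaussianFeatureCoeff x k * gaussianFeatureCoeff y k
      = exp (-x ^ 2) * exp (-y ^ 2) *
          ((√2 * x) ^ k * (√2 * y) ^ k / (√(k ! : ℝ) * √(k ! : ℝ))) := by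
        unfold gaussianFeatureCoeff; ring
    _ = _ := by rw [htwo, hfact]

theorem hasSum_gaussianFeatureCoeff_mul (x y : ℝ) :
    HasSum (fun k => gaussianFeatureCoeff x k * gaussianFeatureCoeff y k) (exp (-(x - y) ^ 2)) := by
  have hexp : exp (-(x - y) ^ 2) = exp (-x ^ 2) * exp (-y ^ 2) * exp (2 * x * y) := by
    rw [← exp_add, ← exp_add]; ring_nf
  simp only [gaussianFeatureCoeff_mul, hexp]
  exact (Real.hasSum_pow_div_factorial (2 * x * y)).mul_left _

theorem memℓp_gaussianFeatureCoeff (x : ℝ) : Memℓp (gaussianFeatureCoeff x) 2 := by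
  refine memℓp_gen ?_
  simpa [sq] using (hasSum_gaussianFeatureCoeff_mul x x).summable

noncomputable def gaussianFeature (x : ℝ) : lp (fun _ : ℕ => ℝ) 2 :=
  ⟨gaussianFeatureCoeff x, memℓp_gaussianFeatureCoeff x⟩

theorem inner_gaussianFeature (x y : ℝ) :
    ⟪gaussianFeature x, gaussianFeature y⟫ = exp (-(x - y) ^ 2) := by
  refine (lp.hasSum_inner _ _).unique ?_
  simpa [gaussianFeature, mul_comm] using hasSum_gaussianFeatureCoeff_mul x y

/-- The unit-width Gaussian kernel on `ℝ` is positive semidefinite. -/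
theorem gaussian_kernel_posSemidef (n : ℕ) (x : Fin n → ℝ) (c : Fin n → ℝ) :
    0 ≤ ∑ i : Fin n, ∑ j : Fin n, c i * c j * Real.exp (-(x i - x j)^2) := by
  simpa only [Function.comp_apply, inner_gaussianFeature] using
    sum_sum_mul_mul_inner_nonneg univ c (gaussianFeature ∘ x)
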